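/- Closure conversion commutes with label erasure: for every value-named CPS term M, er(C_cc(M)) ≡ C_cc(er(M)). -/

import Mathlib

/-!
Statement 7: Closure conversion commutes with label erasure: for every
value-named CPS term `M`, `er(C_cc(M)) ≡ C_cc(er(M))`.
-/

namespace CostLabelling

abbrev Var := ℕ
abbrev Label := ℕ

inductive Tm : Type where
  | var : Var → Tm
  | lam : List Var → Tm → Tm
  | app : Tm → List Tm → Tm
  | tup : List Tm → Tm
  | proj : ℕ → Tm → Tm
  | letin : Var → Tm → Tm → Tm
  | pre : Label → Tm → Tm
  | post : Tm → Label → Tm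

inductive IsValue : Tm → Prop where
  | var : ∀ x, IsValue (.var x)
  | lam : ∀ xs M, IsValue (.lam xs M)
  | tup : ∀ Vs, (∀ V ∈ Vs, IsValue V) → IsValue (.tup Vs)

mutual
def subst (V : Tm) (x : Var) : Tm → Tm
  | .var y => if y = x then V else .var y
  | .lam xs M => if x ∈ xs then .lam xs M else .lam xs (subst V x M)
  | .app M Ns => .app (subst V x M) (substList V x Ns)
  | .tup Ms => .tup (substList V x Ms)
  | .proj i M => .proj i (subst V x M)
  | .letin y M N => .letin y (subst V x M) (if y = x then N else subst V x N)
  | .pre l M => .pre l (subst V x M)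
  | .post M l => .post (subst V x M) l
def substList (V : Tm) (x : Var) : List Tm → List Tm
  | [] => []
  | M :: Ms => subst V x M :: substList V x Ms
end

mutual
def fv : Tm → List Var
  | .var x => [x]
  | .lam xs M => (fv M).filter (fun y => y ∉ xs)
  | .app M Ns => fv M ++ fvList Ns
  | .tup Ms => fvList Ms
  | .proj _ M => fv M
  | .letin y M N => fv M ++ (fv N).filter (fun z => z ≠ y)
  | .pre _ M => fv M
  | .post M _ => fv M
def fvList : List Tm → List Var
  | [] => []
  | M :: Ms => fv M ++ fvList Ms
end

mutual
/-- The label-erasure function: removes all pre- and post-labellings. -/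
def er : Tm → Tm
  | .var x => .var x
  | .lam xs M => .lam xs (er M)
  | .app M Ns => .app (er M) (erList Ns)
  | .tup Ms => .tup (erList Ms)
  | .proj i M => .proj i (er M)
  | .letin x M N => .letin x (er M) (er N)
  | .pre _ M => er M
  | .post M _ => er M
def erList : List Tm → List Tm
  | [] => []
  | M :: Ms => er M :: erList Ms
end

/-- The reserved names `c` and `e` used by closure conversion (the paper
reuses the literal names `c` and `e`, relying on shadowing). -/
def cVar : Var := 0
def eVar : Var := 1

/-- `let (z₁,…,z_k) = e in B`, i.e. `let z₁ = π₁(e) in … let z_k = π_k(e) in B`. -/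
def bindProjs (e : Var) : List Var → ℕ → Tm → Tm
  | [], _, B => B
  | z :: zs, i, B => .letin z (.proj i (.var e)) (bindProjs e zs (i + 1) B)

/-- Closure conversion on value named CPS terms:
`C_cc(@(x,y⁺)) = let (c,e) = x in @(c,e,y⁺)`;
`C_cc(let x = λx⁺.N in M) = let c = λe,x⁺.(let (z₁,…,z_k) = e in C_cc(N)) in
 let e = (z₁,…,z_k) in let x = (c,e) in C_cc(M)` where
`{z₁,…,z_k} = fv(λx⁺.N)`; `C_cc` is homomorphic otherwise. -/
def cc : Tm → Tm
  | .app M Ns =>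
      .letin cVar (.proj 1 M)
        (.letin eVar (.proj 2 M)
          (.app (.var cVar) (.var eVar :: Ns)))
  | .letin x (.lam ys N) M =>
      .letin cVar (.lam (eVar :: ys)
          (bindProjs eVar ((fv (.lam ys N)).dedup) 1 (cc N)))
        (.letin eVar (.tup (((fv (.lam ys N)).dedup).map .var))
          (.letin x (.tup [.var cVar, .var eVar]) (cc M)))
  | .letin x C M => .letin x C (cc M)
  | .pre l M => .pre l (cc M)
  | M => M

mutual
/-- Let-bindable terms `C ::= λx⁺.M | (x*) | πᵢ(x)` of `λℓ_cps,vn`. -/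
inductive VnC : Tm → Prop where
  | lam : ∀ xs M, VnTm M → VnC (.lam xs M)
  | tup : ∀ (xs : List Var), VnC (.tup (xs.map .var))
  | proj : ∀ i (y : Var), VnC (.proj i (.var y))

/-- Terms `M ::= @(x,x⁺) | let x = C in M | ℓ > M` of `λℓ_cps,vn`. -/
inductive VnTm : Tm → Prop where
  | app : ∀ (x : Var) (ys : List Var), ys ≠ [] →
      VnTm (.app (.var x) (ys.map .var))
  | letin : ∀ x C M, VnC C → VnTm M → VnTm (.letin x C M)
  | pre : ∀ l M, VnTm M → VnTm (.pre l M)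
end

/-!
Erasure preserves free variables and commutes with the projection bindings, so the only
non-homomorphic clause of `cc` (closing a `λ` over its free variables) commutes with `er`.
Value-naming is what makes the remaining clauses match: a labelling never sits between a
`let` and the `λ` it binds, nor at the head of a term, where `cc` would not look through it.
-/

mutual
theorem fv_er : ∀ M, fv (er M) = fv M
  | .var _ => rfl
  | .lam xs M => by simp only [er, fv, fv_er M]
  | .app M Ns => by simp only [er, fv, fv_er M, fvList_erList Ns]
  | .tup Ms => by simp only [er, fv, fvList_erList Ms]
  | .proj _ M => by simp only [er, fv, fv_er M]
  | .letin _ M N => by simp only [er, fv, fv_er M, fv_er N]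
  | .pre _ M => by simp only [er, fv, fv_er M]
  | .post M _ => by simp only [er, fv, fv_er M]
theorem fvList_erList : ∀ Ms, fvList (erList Ms) = fvList Ms
  | [] => rfl
  | M :: Ms => by simp only [erList, fvList, fv_er M, fvList_erList Ms]
end

theorem erList_map_var : ∀ xs : List Var, erList (xs.map .var) = xs.map .var
  | [] => rfl
  | x :: xs => by simp only [List.map_cons, erList, er, erList_map_var xs]

theorem er_bindProjs (e : Var) : ∀ zs i B,
    er (bindProjs e zs i B) = bindProjs e zs i (er B)
  | [], _, _ => rfl
  | _ :: zs, i, B => by simp only [bindProjs, er, er_bindProjs e zs (i + 1) B]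

theorem er_cc_app (M : Tm) (Ns : List Tm) :
    er (cc (.app M Ns)) = cc (er (.app M Ns)) := by
  simp only [cc, er, erList]

theorem er_cc_letin_lam (x : Var) (ys : List Var) (N M : Tm)
    (hN : er (cc N) = cc (er N)) (hM : er (cc M) = cc (er M)) :
    er (cc (.letin x (.lam ys N) M)) = cc (er (.letin x (.lam ys N) M)) := by
  have hfv : fv (.lam ys (er N)) = fv (.lam ys N) := fv_er (.lam ys N)
  simp only [cc, er, erList, er_bindProjs, erList_map_var, hfv, hN, hM]

theorem er_cc_letin_tup (x : Var) (Ms : List Tm) (M : Tm)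
    (hM : er (cc M) = cc (er M)) :
    er (cc (.letin x (.tup Ms) M)) = cc (er (.letin x (.tup Ms) M)) := by
  simp only [cc, er, hM]

theorem er_cc_letin_proj (x : Var) (i : ℕ) (N M : Tm)
    (hM : er (cc M) = cc (er M)) :
    er (cc (.letin x (.proj i N) M)) = cc (er (.letin x (.proj i N) M)) := by
  simp only [cc, er, hM]

theorem er_cc_pre (l : Label) (M : Tm) (hM : er (cc M) = cc (er M)) :
    er (cc (.pre l M)) = cc (er (.pre l M)) := by
  simp only [cc, er, hM]

/-- `er(C_cc(M)) ≡ C_cc(er(M))` for every value named CPS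
term `M`. -/
theorem closure_conversion_commutes_with_erasure
    (M : Tm) (hM : VnTm M) :
    er (cc M) = cc (er M) := by
  -- A let-bindable term is handled together with the `let` that binds it.
  refine VnTm.rec
    (motive_1 := fun C _ => ∀ x M, er (cc M) = cc (er M) →
      er (cc (.letin x C M)) = cc (er (.letin x C M)))
    (motive_2 := fun M _ => er (cc M) = cc (er M)) ?lam ?tup ?proj ?app ?letin ?pre hM
  case lam => exact fun ys N _ ihN x M ihM => er_cc_letin_lam x ys N M ihN ihM
  case tup => exact fun _ x M ihM => er_cc_letin_tup x _ M ihM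
  case proj => exact fun i _ x M ihM => er_cc_letin_proj x i _ M ihM
  case app => exact fun _ _ _ => er_cc_app _ _
  case letin => exact fun x _ M _ _ ihC ihM => ihC x M ihM
  case pre => exact fun l M _ ihM => er_cc_pre l M ihM

end CostLabelling
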